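/- arXiv:2108.00260 — 2 statements merged into one kernel-verified Lean document; each statement's English description precedes it below -/
import Mathlib

section
/- Let (X,τ) be a compatible decoration and σ = w_X ∘ τ. Then the set of roots lying in the (−1)-eigenspace V^{−σ} is exactly Φ_X, i.e. Φ ∩ V^{−σ} = Φ_X. Moreover V^{−σ} is spanned over ℚ by {α_i : i ∈ X} together with {α_i − α_{τ(i)} : i with τ(i) ≠ i}. -/
open scoped BigOperators

namespace KMStmt

variable {I : Type}

/-- The simple root `α i`, as an element of the root lattice realized inside `I → ℚ`. -/
noncomputable def sr [DecidableEq I] (i : I) : I → ℚ := Pi.single i 1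

/-- `A` is a generalized Cartan matrix. -/
def IsGCM [Fintype I] (A : I → I → ℤ) : Prop :=
  (∀ i, A i i = 2) ∧ (∀ i j, i ≠ j → A i j ≤ 0) ∧ (∀ i j, A i j = 0 → A j i = 0)

/-- `s` realizes the simple reflections on the root lattice:
`s i v = v - ⟨v, αᵢ^∨⟩ αᵢ`, where `⟨α j, αᵢ^∨⟩ = A i j`. -/
def IsReflRep [Fintype I] [DecidableEq I] (A : I → I → ℤ)
    (s : I → ((I → ℚ) ≃ₗ[ℚ] (I → ℚ))) : Prop :=
  ∀ i v, s i v = v - (∑ j, v j * (A i j : ℚ)) • sr i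

/-- The Weyl group, as a subgroup of the linear automorphisms of the root space. -/
def Wgrp [Fintype I] [DecidableEq I] (s : I → ((I → ℚ) ≃ₗ[ℚ] (I → ℚ))) :
    Subgroup ((I → ℚ) ≃ₗ[ℚ] (I → ℚ)) := Subgroup.closure (Set.range s)

/-- The (standard) parabolic subgroup `W_X` generated by the reflections `s i`, `i ∈ X`. -/
def Wpara [Fintype I] [DecidableEq I] (s : I → ((I → ℚ) ≃ₗ[ℚ] (I → ℚ))) (X : Set I) :
    Subgroup ((I → ℚ) ≃ₗ[ℚ] (I → ℚ)) := Subgroup.closure (s '' X)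

/-- The nonnegative cone `Q⁺` of the root lattice. -/
def Qplus [Fintype I] : Set (I → ℚ) := {v | ∀ j, ∃ n : ℕ, v j = (n : ℚ)}

/-- The projection `λ ↦ λ̄ = (λ + σ(λ))/2` onto the `σ`-fixed subspace. -/
noncomputable def bar [Fintype I] (σ : (I → ℚ) → (I → ℚ)) (v : I → ℚ) : I → ℚ :=
  (2⁻¹ : ℚ) • (v + σ v)

/-- `σ = w_X ∘ τ` as a map on the root space. -/
def σmap [Fintype I] (wX tV : (I → ℚ) ≃ₗ[ℚ] (I → ℚ)) : (I → ℚ) → (I → ℚ) :=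
  fun v => wX (tV v)

/-- `(X, τ)` is a compatible decoration, with `tV` the action of `τ` on the root space and
`wX` the longest element of the (finite) parabolic subgroup `W_X`:
`τ` is an involutive diagram automorphism of `A` stabilizing `X`, `X` is of finite type,
and `τ|_X` is the opposition involution of `X` (i.e. `w_X (α i) = -α (τ i)` for `i ∈ X`). -/
def IsCompatibleDec [Fintype I] [DecidableEq I] (A : I → I → ℤ)
    (s : I → ((I → ℚ) ≃ₗ[ℚ] (I → ℚ))) (X : Set I) (τ : Equiv.Perm I)
    (tV wX : (I → ℚ) ≃ₗ[ℚ] (I → ℚ)) : Prop :=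
  (∀ i j, A (τ i) (τ j) = A i j) ∧ (∀ i, τ (τ i) = i) ∧ (∀ i ∈ X, τ i ∈ X) ∧
  (∀ i, tV (sr i) = sr (τ i)) ∧
  Finite (Wpara s X) ∧ wX ∈ Wpara s X ∧ wX * wX = 1 ∧
  (∀ i ∈ X, wX (sr i) = - sr (τ i))

/-- `(X, τ)` is a generalized Satake diagram: (it is a compatible decoration and) there is no
`i ∈ I \ X` with `τ i = i` whose connected component in `X ∪ {i}` is of type `A₂`. -/
def IsGSat [Fintype I] (A : I → I → ℤ) (X : Set I) (τ : Equiv.Perm I) : Prop :=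
  ¬ ∃ i, i ∉ X ∧ τ i = i ∧ ∃ j ∈ X, A i j = -1 ∧ A j i = -1 ∧
      ∀ k ∈ X, k ≠ j → A i k = 0 ∧ A j k = 0

/-- `B` is the invariant symmetric bilinear form, with symmetrizers `ε`. -/
def IsInvForm [Fintype I] [DecidableEq I] (A : I → I → ℤ) (ε : I → ℚ)
    (B : (I → ℚ) →ₗ[ℚ] (I → ℚ) →ₗ[ℚ] ℚ)
    (s : I → ((I → ℚ) ≃ₗ[ℚ] (I → ℚ))) : Prop :=
  (∀ i, 0 < ε i) ∧ (∀ u v, B u v = B v u) ∧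
  (∀ i j, B (sr i) (sr j) = ε i * (A i j : ℚ)) ∧
  (∀ i u v, B (s i u) (s i v) = B u v)

/-- `Φ` is the root system: it contains the simple roots, is stable under the simple
reflections and under negation, does not contain `0`, and every root is positive or
negative. -/
def IsRootSystem [Fintype I] [DecidableEq I]
    (s : I → ((I → ℚ) ≃ₗ[ℚ] (I → ℚ))) (Φ : Set (I → ℚ)) : Prop :=
  (∀ i, sr i ∈ Φ) ∧ (0 ∉ Φ) ∧ (∀ v ∈ Φ, v ∈ (Qplus : Set (I → ℚ)) ∨ -v ∈ (Qplus : Set (I → ℚ))) ∧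
  (∀ i, ∀ v ∈ Φ, s i v ∈ Φ) ∧ (∀ v ∈ Φ, -v ∈ Φ)

/-- The orthogonal reflection `s_β : v ↦ v - 2 (β, v)/(β, β) β`, as an endomorphism. -/
noncomputable def reflMap [Fintype I] (B : (I → ℚ) →ₗ[ℚ] (I → ℚ) →ₗ[ℚ] ℚ)
    (β : I → ℚ) : Module.End ℚ (I → ℚ) :=
  LinearMap.id - (B β).smulRight ((2 / B β β) • β)

/-- `Istar` is a set of representatives of the `τ`-orbits on `I \ X`. -/
def IsOrbitReps [Fintype I] [DecidableEq I] (X : Finset I) (τ : Equiv.Perm I)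
    (Istar : Finset I) : Prop :=
  (∀ i ∈ Istar, i ∉ X) ∧ (∀ i, i ∉ X → i ∈ Istar ∨ τ i ∈ Istar) ∧
  (∀ i ∈ Istar, τ i ∈ Istar → τ i = i)

/-- The restricted root system `Φ̄ = { λ̄ : λ ∈ Φ } \ {0}`. -/
noncomputable def restRoots [Fintype I] (σ : (I → ℚ) → (I → ℚ)) (Φ : Set (I → ℚ)) :
    Set (I → ℚ) := {u | u ≠ 0 ∧ ∃ l ∈ Φ, u = bar σ l}


set_option linter.unusedSectionVars false

section Aux

variable [Fintype I] [DecidableEq I]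

lemma mulApply (e₁ e₂ : (I → ℚ) ≃ₗ[ℚ] (I → ℚ)) (v : I → ℚ) :
    (e₁ * e₂) v = e₁ (e₂ v) := rfl

lemma sum_single (v : I → ℚ) : ∑ j, v j • sr j = v := by
  funext k
  simp [sr, Finset.sum_apply, Pi.single_apply]

lemma apply_eq_sum (f : (I → ℚ) ≃ₗ[ℚ] (I → ℚ)) (v : I → ℚ) :
    f v = ∑ j, v j • f (sr j) := by
  conv_lhs => rw [← sum_single v]
  rw [map_sum]
  simp

variable {A : I → I → ℤ} {s : I → ((I → ℚ) ≃ₗ[ℚ] (I → ℚ))} {X : Set I}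
  {τ : Equiv.Perm I} {tV wX : (I → ℚ) ≃ₗ[ℚ] (I → ℚ)}

lemma tV_apply (hτ : ∀ i, τ (τ i) = i) (htV : ∀ i, tV (sr i) = sr (τ i))
    (v : I → ℚ) (j : I) : tV v j = v (τ j) := by
  rw [apply_eq_sum tV v]
  simp only [htV]
  rw [Finset.sum_apply]
  have h : ∀ i, (v i • sr (τ i)) j = if i = τ j then v i else 0 := by
    intro i
    by_cases h : i = τ j
    · subst h; simp [sr, hτ]
    · have : j ≠ τ i := fun hh => h (by rw [hh, hτ])
      simp [sr, Pi.single_eq_of_ne this, h]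
  simp [h]

lemma para_apply_notMem (hs : IsReflRep A s) {w : (I → ℚ) ≃ₗ[ℚ] (I → ℚ)}
    (hw : w ∈ Wpara s X) {k : I} (hk : k ∉ X) : ∀ v, w v k = v k := by
  refine Subgroup.closure_induction (fun x hx v => ?_) (fun v => rfl)
    (fun x y hx hy px py v => ?_) (fun x hx px v => ?_) hw
  · obtain ⟨i, hiX, rfl⟩ := hx
    rw [hs i v]
    have hki : k ≠ i := fun h => hk (h ▸ hiX)
    simp [sr, Pi.single_eq_of_ne hki]
  · rw [mulApply, px, py]
  · have h2 : x (x⁻¹ v) = v := by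
      rw [← mulApply, mul_inv_cancel]; rfl
    conv_rhs => rw [← h2]
    rw [px]

lemma tV_conj_s (hs : IsReflRep A s) (hA2 : ∀ i j, A (τ i) (τ j) = A i j)
    (hτ : ∀ i, τ (τ i) = i) (htV : ∀ i, tV (sr i) = sr (τ i)) (j : I) :
    tV * s j * tV = s (τ j) := by
  refine LinearEquiv.ext fun v => ?_
  funext k
  have h1 : (tV * s j * tV) v k = (s j (tV v)) (τ k) := by
    rw [mulApply, mulApply, tV_apply hτ htV]
  rw [h1, hs j (tV v), hs (τ j) v]
  have hc : ∑ m, tV v m * (A j m : ℚ) = ∑ m, v m * (A (τ j) m : ℚ) := by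
    refine Fintype.sum_equiv τ _ _ fun m => ?_
    rw [tV_apply hτ htV]
    congr 1
    have : A (τ j) (τ m) = A j m := hA2 j m
    exact_mod_cast congrArg (fun z : ℤ => (z : ℚ)) this.symm
  have hsr : sr j (τ k) = sr (τ j) k := by
    by_cases h : k = τ j
    · subst h; simp only [sr]; rw [hτ]; simp
    · have : τ k ≠ j := fun hh => h (by rw [← hh, hτ])
      simp [sr, Pi.single_eq_of_ne this, Pi.single_eq_of_ne h]
  simp only [Pi.sub_apply, Pi.smul_apply, smul_eq_mul]
  rw [tV_apply hτ htV, hc, hsr, hτ]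

lemma tV_sq (hτ : ∀ i, τ (τ i) = i) (htV : ∀ i, tV (sr i) = sr (τ i)) :
    tV * tV = 1 := by
  refine LinearEquiv.ext fun v => ?_
  funext k
  rw [mulApply, tV_apply hτ htV, tV_apply hτ htV, hτ]
  rfl

lemma conj_mem (hs : IsReflRep A s) (hA2 : ∀ i j, A (τ i) (τ j) = A i j)
    (hτ : ∀ i, τ (τ i) = i) (hXτ : ∀ i ∈ X, τ i ∈ X)
    (htV : ∀ i, tV (sr i) = sr (τ i))
    {w : (I → ℚ) ≃ₗ[ℚ] (I → ℚ)} (hw : w ∈ Wpara s X) :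
    tV * w * tV ∈ Wpara s X := by
  have h1 : tV * tV = 1 := tV_sq hτ htV
  have htVi : tV⁻¹ = tV := inv_eq_of_mul_eq_one_left h1
  refine Subgroup.closure_induction (fun x hx => ?_) ?_
    (fun x y hx hy px py => ?_) (fun x hx px => ?_) hw
  · obtain ⟨i, hiX, rfl⟩ := hx
    rw [tV_conj_s hs hA2 hτ htV]
    exact Subgroup.subset_closure ⟨τ i, hXτ i hiX, rfl⟩
  · rw [mul_one, h1]; exact one_mem _
  · have e : tV * (x * y) * tV = (tV * x * tV) * (tV * y * tV) := by
      have : (tV * x * tV) * (tV * y * tV) = tV * x * (tV * tV) * y * tV := by group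
      rw [this, h1, mul_one]
      group
    rw [e]; exact mul_mem px py
  · have e : tV * x⁻¹ * tV = (tV * x * tV)⁻¹ := by
      rw [mul_inv_rev, mul_inv_rev, htVi, mul_assoc]
    rw [e]; exact inv_mem px

lemma fix_of_supp {g : (I → ℚ) ≃ₗ[ℚ] (I → ℚ)} (hg : ∀ j ∈ X, g (sr j) = sr j)
    {v : I → ℚ} (hv : ∀ k, k ∉ X → v k = 0) : g v = v := by
  rw [apply_eq_sum g v]
  conv_rhs => rw [← sum_single v]
  refine Finset.sum_congr rfl fun j _ => ?_
  by_cases hj : j ∈ X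
  · rw [hg j hj]
  · rw [hv j hj]; simp

end Aux

/-- Let `(X, τ)` be a compatible decoration and `σ = w_X ∘ τ`.  Then the set of roots lying
in the `(−1)`-eigenspace `V^{−σ}` is exactly `Φ_X`, and `V^{−σ}` is spanned over `ℚ` by
`{α j : j ∈ X}` together with `{α i − α (τ i) : τ i ≠ i}`. -/
theorem minus_one_eigenspace {I : Type} [Fintype I] [DecidableEq I]
    (A : I → I → ℤ) (hA : IsGCM A)
    (s : I → ((I → ℚ) ≃ₗ[ℚ] (I → ℚ))) (hs : IsReflRep A s)
    (X : Set I) (τ : Equiv.Perm I) (tV wX : (I → ℚ) ≃ₗ[ℚ] (I → ℚ))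
    (hcd : IsCompatibleDec A s X τ tV wX)
    (Φ : Set (I → ℚ)) (hΦ : IsRootSystem s Φ) :
    {v ∈ Φ | σmap wX tV v = -v} = {v ∈ Φ | ∀ k, k ∉ X → v k = 0} ∧
    {v : I → ℚ | σmap wX tV v = -v} =
      ↑(Submodule.span ℚ
        ((fun j => sr j) '' X ∪ {u : I → ℚ | ∃ i, τ i ≠ i ∧ u = sr i - sr (τ i)})) := by
  obtain ⟨hA2, hτ, hXτ, htV, hfin, hwXmem, hwX2, hwXsr⟩ := hcd
  classical
  have hτc : ∀ k, k ∉ X → τ k ∉ X := fun k hk h => hk (by rw [← hτ k]; exact hXτ _ h)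
  have σ_supp : ∀ v : I → ℚ, (∀ k, k ∉ X → v k = 0) → σmap wX tV v = -v := by
    intro v hv
    show wX (tV v) = -v
    have h1 : tV v = ∑ j, v j • sr (τ j) := by
      rw [apply_eq_sum tV v]; simp only [htV]
    rw [h1, map_sum]
    have h2 : ∀ j ∈ Finset.univ, wX (v j • sr (τ j)) = -(v j • sr j) := by
      intro j _
      by_cases hj : j ∈ X
      · rw [map_smul, hwXsr (τ j) (hXτ j hj), hτ, smul_neg]
      · rw [hv j hj]; simp
    rw [Finset.sum_congr rfl h2, Finset.sum_neg_distrib, sum_single]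
  have wout : ∀ {k : I}, k ∉ X → ∀ v : I → ℚ, wX v k = v k :=
    fun {k} hk v => para_apply_notMem hs hwXmem hk v
  have hcoord : ∀ v : I → ℚ, σmap wX tV v = -v → ∀ k, k ∉ X → v (τ k) = -v k := by
    intro v hσ k hk
    have h := congrFun hσ k
    have h1 : σmap wX tV v k = v (τ k) := by
      show wX (tV v) k = v (τ k)
      rw [wout hk (tV v), tV_apply hτ htV]
    rw [← h1, h]; rfl
  have htVsq : tV * tV = 1 := tV_sq hτ htV
  have hg1 : (tV * wX * tV) * wX = 1 := by
    set g := (tV * wX * tV) * wX with hgdef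
    have hgmem : g ∈ Wpara s X := mul_mem (conj_mem hs hA2 hτ hXτ htV hwXmem) hwXmem
    have hgsr : ∀ j ∈ X, g (sr j) = sr j := by
      intro j hj
      have e1 : g (sr j) = tV (wX (tV (wX (sr j)))) := rfl
      rw [e1, hwXsr j hj, map_neg, htV, hτ, map_neg, hwXsr j hj, neg_neg, htV, hτ]
    have hgout : ∀ v k, k ∉ X → g v k = v k := fun v k hk => para_apply_notMem hs hgmem hk v
    have hgfix : ∀ v, g v = v := by
      intro v
      set d := g v - v with hd
      have hdsupp : ∀ k, k ∉ X → d k = 0 := by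
        intro k hk
        rw [hd]
        simp [hgout v k hk]
      have hgd : g d = d := fix_of_supp hgsr hdsupp
      have hgv : g v = v + d := by rw [hd]; abel
      have hpow : ∀ m : ℕ, (g ^ m) v = v + (m : ℚ) • d := by
        intro m
        induction m with
        | zero => simp
        | succ n ih =>
          rw [pow_succ', mulApply, ih, map_add, map_smul, hgd, hgv,
            Nat.cast_succ, add_smul, one_smul]
          abel
      haveI : Finite (Wpara s X) := hfin
      set gg : Wpara s X := ⟨g, hgmem⟩ with hgg
      have hord : 0 < orderOf gg := orderOf_pos gg
      have hpone : g ^ orderOf gg = 1 := by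
        have h := pow_orderOf_eq_one gg
        have h2 := congrArg (Subtype.val) h
        simpa [hgg] using h2
      have hv2 : v + (orderOf gg : ℚ) • d = v := by
        rw [← hpow, hpone]; rfl
      have hsm : (orderOf gg : ℚ) • d = 0 := add_eq_left.mp hv2
      have hd0 : d = 0 := by
        rcases smul_eq_zero.mp hsm with h | h
        · exact absurd h (Nat.cast_ne_zero.mpr hord.ne')
        · exact h
      have h7 := hgv
      rw [hd0, add_zero] at h7
      exact h7
    exact LinearEquiv.ext hgfix
  have hmix : (wX * tV) * (wX * tV) = 1 := by
    have hwXinv : wX⁻¹ = wX := inv_eq_of_mul_eq_one_left hwX2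
    have hconj : tV * wX * tV = wX := by
      have h2 : tV * wX * tV = wX⁻¹ := mul_eq_one_iff_eq_inv.mp hg1
      rw [h2, hwXinv]
    have h3 : tV * wX = wX * tV := by
      have h4 : tV * wX * tV * tV = wX * tV := by rw [hconj]
      rwa [mul_assoc (tV * wX), htVsq, mul_one] at h4
    calc (wX * tV) * (wX * tV) = wX * (tV * wX) * tV := by group
      _ = wX * (wX * tV) * tV := by rw [h3]
      _ = (wX * wX) * (tV * tV) := by group
      _ = 1 := by rw [hwX2, htVsq, one_mul]
  have hσ2 : ∀ v, σmap wX tV (σmap wX tV v) = v := by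
    intro v
    have h : σmap wX tV (σmap wX tV v) = ((wX * tV) * (wX * tV)) v := rfl
    rw [h, hmix]; rfl
  have σ_gen2 : ∀ i : I, σmap wX tV (sr i - sr (τ i)) = -(sr i - sr (τ i)) := by
    intro i
    set u := sr i - sr (τ i) with hu
    have htVu : tV u = -u := by
      rw [hu, map_sub, htV, htV, hτ]; abel
    set d := wX u - u with hd
    have hdsupp : ∀ k, k ∉ X → d k = 0 := by
      intro k hk; rw [hd]; simp [wout hk u]
    have hwXu : wX u = u + d := by rw [hd]; abel
    have hσu : σmap wX tV u = -(u + d) := by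
      show wX (tV u) = _
      rw [htVu, map_neg, hwXu]
    have hσd : σmap wX tV d = -d := σ_supp d hdsupp
    have hsq := hσ2 u
    rw [hσu] at hsq
    have hlin : σmap wX tV (-(u + d)) = -(σmap wX tV u + σmap wX tV d) := by
      show wX (tV (-(u + d))) = _
      rw [map_neg, map_add, map_neg, map_add]
      rfl
    rw [hlin, hσu, hσd] at hsq
    have hd0 : d = 0 := by
      have h6 : u + (d + d) = u := by
        calc u + (d + d) = -(-(u + d) + -d) := by abel
          _ = u := hsq
      have h7 : (2:ℚ) • d = 0 := by
        rw [two_smul]; exact add_eq_left.mp h6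
      rcases smul_eq_zero.mp h7 with h | h
      · norm_num at h
      · exact h
    rw [hσu, hd0, add_zero]
  constructor
  · ext v
    simp only [Set.mem_sep_iff, Set.mem_setOf_eq]
    constructor
    · rintro ⟨hv, hσv⟩
      refine ⟨hv, fun k hk => ?_⟩
      have h1 : v (τ k) = -v k := hcoord v hσv k hk
      rcases hΦ.2.2.1 v hv with hq | hq
      · simp only [Qplus, Set.mem_setOf_eq] at hq
        obtain ⟨n, hn⟩ := hq k
        obtain ⟨m, hm⟩ := hq (τ k)
        have c1 : (0:ℚ) ≤ (n:ℚ) := Nat.cast_nonneg n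
        have c2 : (0:ℚ) ≤ (m:ℚ) := Nat.cast_nonneg m
        linarith
      · simp only [Qplus, Set.mem_setOf_eq, Pi.neg_apply] at hq
        obtain ⟨n, hn⟩ := hq k
        obtain ⟨m, hm⟩ := hq (τ k)
        have c1 : (0:ℚ) ≤ (n:ℚ) := Nat.cast_nonneg n
        have c2 : (0:ℚ) ≤ (m:ℚ) := Nat.cast_nonneg m
        linarith
    · rintro ⟨hv, hsupp⟩
      exact ⟨hv, σ_supp v hsupp⟩
  · ext v
    simp only [Set.mem_setOf_eq, SetLike.mem_coe]
    set S : Set (I → ℚ) :=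
      (fun j => sr j) '' X ∪ {u : I → ℚ | ∃ i, τ i ≠ i ∧ u = sr i - sr (τ i)} with hS
    constructor
    · intro hσv
      have hK : ∀ k, k ∉ X → v (τ k) = -v k := hcoord v hσv
      have hgen1 : ∀ j ∈ X, sr j ∈ Submodule.span ℚ S := fun j hj =>
        Submodule.subset_span (Or.inl ⟨j, hj, rfl⟩)
      have hgen2 : ∀ k : I, sr k - sr (τ k) ∈ Submodule.span ℚ S := by
        intro k
        by_cases h : τ k = k
        · rw [h, sub_self]; exact zero_mem _
        · exact Submodule.subset_span (Or.inr ⟨k, h, rfl⟩)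
      have hsplit : (∑ j ∈ Finset.univ.filter (fun j => j ∈ X), v j • sr j)
          + ∑ k ∈ Finset.univ.filter (fun k => ¬ (k ∈ X)), v k • sr k = v := by
        rw [Finset.sum_filter_add_sum_filter_not, sum_single]
      have e2 : ∑ k ∈ Finset.univ.filter (fun k => ¬ (k ∈ X)), v k • sr (τ k)
          = ∑ k ∈ Finset.univ.filter (fun k => ¬ (k ∈ X)), v (τ k) • sr k := by
        refine Finset.sum_equiv τ (fun k => ?_) (fun k hk => ?_)
        · simp only [Finset.mem_filter, Finset.mem_univ, true_and]
          exact ⟨fun h => hτc k h, fun h hk => h (hXτ k hk)⟩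
        · show v k • sr (τ k) = v (τ (τ k)) • sr (τ k)
          rw [hτ]
      have e3 : ∑ k ∈ Finset.univ.filter (fun k => ¬ (k ∈ X)), v (τ k) • sr k
          = -∑ k ∈ Finset.univ.filter (fun k => ¬ (k ∈ X)), v k • sr k := by
        rw [← Finset.sum_neg_distrib]
        refine Finset.sum_congr rfl fun k hk => ?_
        have hk' : k ∉ X := (Finset.mem_filter.mp hk).2
        rw [hK k hk', neg_smul]
      have hsum2 : ∑ k ∈ Finset.univ.filter (fun k => ¬ (k ∈ X)), v k • sr k
          = (2⁻¹ : ℚ) • ∑ k ∈ Finset.univ.filter (fun k => ¬ (k ∈ X)),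
              v k • (sr k - sr (τ k)) := by
        have e1 : ∑ k ∈ Finset.univ.filter (fun k => ¬ (k ∈ X)), v k • (sr k - sr (τ k))
            = (∑ k ∈ Finset.univ.filter (fun k => ¬ (k ∈ X)), v k • sr k)
              - ∑ k ∈ Finset.univ.filter (fun k => ¬ (k ∈ X)), v k • sr (τ k) := by
          rw [← Finset.sum_sub_distrib]
          exact Finset.sum_congr rfl fun k _ => smul_sub _ _ _
        rw [e1, e2, e3, sub_neg_eq_add, ← two_smul ℚ, smul_smul]
        norm_num
      rw [← hsplit]
      refine Submodule.add_mem _ ?_ ?_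
      · exact Submodule.sum_mem _ fun j hj =>
          Submodule.smul_mem _ _ (hgen1 j (Finset.mem_filter.mp hj).2)
      · rw [hsum2]
        exact Submodule.smul_mem _ _ (Submodule.sum_mem _ fun k _ =>
          Submodule.smul_mem _ _ (hgen2 k))
    · intro hv
      refine Submodule.span_induction ?_ ?_ ?_ ?_ hv
      · rintro x (⟨j, hj, rfl⟩ | ⟨i, hne, rfl⟩)
        · refine σ_supp _ fun k hk => ?_
          have hkj : k ≠ j := fun h => hk (h ▸ hj)
          exact Pi.single_eq_of_ne hkj 1
        · exact σ_gen2 i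
      · show wX (tV 0) = -0
        simp
      · intro x y hx hy px py
        show wX (tV (x + y)) = -(x + y)
        rw [map_add, map_add]
        have px' : wX (tV x) = -x := px
        have py' : wX (tV y) = -y := py
        rw [px', py']; abel
      · intro a x hx px
        show wX (tV (a • x)) = -(a • x)
        rw [map_smul, map_smul]
        have px' : wX (tV x) = -x := px
        rw [px', smul_neg]


end KMStmt
end

section
/- Let (X,τ) be a compatible decoration, σ = w_X ∘ τ, λ̄ = (λ+σ(λ))/2, and I* a set of representatives of the τ-orbits on I \ X. For i, j ∈ I*, the inner product (α̅_i, α̅_j) is strictly positive if and only if i = j and X ∪ {i, τ(i)} is of finite type; otherwise (α̅_i, α̅_j) ≤ 0. -/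
open scoped BigOperators

namespace KMStmt

variable {I : Type}

section Aux

variable {I : Type} [Fintype I] [DecidableEq I]

lemma sr_apply (i j : I) : sr i j = if j = i then 1 else 0 := Pi.single_apply i 1 j
lemma sr_self (i : I) : sr i i = 1 := by simp [sr]
lemma sr_ne {i j : I} (h : j ≠ i) : sr i j = 0 := by simp [sr_apply, h]
lemma sr_ne_zero (i : I) : sr i ≠ 0 := fun h => by
  have := congrFun h i; rw [sr_self] at this; norm_num at this

lemma sum_sr (v : I → ℚ) : ∑ m, v m • sr m = v := by
  ext j; simp [sr_apply, Finset.sum_apply]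

lemma sum_sr_mul (k : I) (f : I → ℚ) : ∑ j, sr k j * f j = f k := by
  simp [sr_apply]

lemma bexpL (F : (I → ℚ) →ₗ[ℚ] (I → ℚ) →ₗ[ℚ] ℚ) (u v : I → ℚ) :
    F u v = ∑ k, u k * F (sr k) v := by
  conv_lhs => rw [← sum_sr u]
  rw [map_sum]
  simp [LinearMap.sum_apply, smul_eq_mul]

lemma bexpR (F : (I → ℚ) →ₗ[ℚ] (I → ℚ) →ₗ[ℚ] ℚ) (u v : I → ℚ) :
    F u v = ∑ l, v l * F u (sr l) := by
  conv_lhs => rw [← sum_sr v]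
  rw [map_sum]
  simp [smul_eq_mul]

lemma bexp (F : (I → ℚ) →ₗ[ℚ] (I → ℚ) →ₗ[ℚ] ℚ) (u v : I → ℚ) :
    F u v = ∑ k, ∑ l, u k * v l * F (sr k) (sr l) := by
  rw [bexpL]
  refine Finset.sum_congr rfl fun k _ => ?_
  rw [bexpR F (sr k) v, Finset.mul_sum]
  refine Finset.sum_congr rfl fun l _ => by ring

section ctx
variable {A : I → I → ℤ} {s : I → ((I → ℚ) ≃ₗ[ℚ] (I → ℚ))}
variable {ε : I → ℚ} {B : (I → ℚ) →ₗ[ℚ] (I → ℚ) →ₗ[ℚ] ℚ}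

lemma s_apply_apply (hA : IsGCM A) (hs : IsReflRep A s) (k : I) (v : I → ℚ) :
    s k (s k v) = v := by
  have h2 : (A k k : ℚ) = 2 := by exact_mod_cast congrArg Int.cast (hA.1 k)
  have : (s k) ((s k) v) = v := by
    rw [hs k v, hs k]
    set c := ∑ j, v j * (A k j : ℚ) with hc
    have hsum : ∑ j, (v - c • sr k) j * (A k j : ℚ) = c - c * 2 := by
      have : ∀ j, (v - c • sr k) j * (A k j : ℚ)
          = v j * (A k j : ℚ) - c * (sr k j * (A k j : ℚ)) := by
        intro j; simp [sub_mul, smul_eq_mul]; ring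
      rw [Finset.sum_congr rfl fun j _ => this j, Finset.sum_sub_distrib, ← Finset.mul_sum,
        sum_sr_mul, h2, ← hc]
    rw [hsum]
    ext m
    simp [smul_eq_mul]
    ring
  exact this

lemma s_sq (hA : IsGCM A) (hs : IsReflRep A s) (k : I) : s k * s k = 1 :=
  by
    refine DFunLike.ext _ _ fun v => ?_
    simpa using s_apply_apply hA hs k v

lemma s_inv (hA : IsGCM A) (hs : IsReflRep A s) (k : I) : (s k)⁻¹ = s k :=
  inv_eq_of_mul_eq_one_left (s_sq hA hs k)

lemma mul_apply' (f g : (I → ℚ) ≃ₗ[ℚ] (I → ℚ)) (v : I → ℚ) : (f * g) v = f (g v) := rfl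
lemma one_apply' (v : I → ℚ) : (1 : (I → ℚ) ≃ₗ[ℚ] (I → ℚ)) v = v := rfl
lemma apply_inv_apply (f : (I → ℚ) ≃ₗ[ℚ] (I → ℚ)) (v : I → ℚ) : f (f⁻¹ v) = v := by
  rw [← mul_apply', mul_inv_cancel, one_apply']
lemma inv_apply_apply (f : (I → ℚ) ≃ₗ[ℚ] (I → ℚ)) (v : I → ℚ) : f⁻¹ (f v) = v := by
  rw [← mul_apply', inv_mul_cancel, one_apply']

/-- integrality predicate -/
def IsZ (v : I → ℚ) : Prop := ∀ m, ∃ z : ℤ, v m = z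

lemma isZ_sr (k : I) : IsZ (sr k) := fun m => by
  rw [sr_apply]; by_cases h : m = k
  · exact ⟨1, by simp [h]⟩
  · exact ⟨0, by simp [h]⟩

lemma wpara_master (hA : IsGCM A) (hs : IsReflRep A s) (hB : IsInvForm A ε B s)
    (Y : Set I) {w : (I → ℚ) ≃ₗ[ℚ] (I → ℚ)} (hw : w ∈ Wpara s Y) :
    (∀ u v, B (w u) (w v) = B u v) ∧ (∀ v m, m ∉ Y → w v m = v m) ∧
    (∀ v, IsZ v → IsZ (w v)) ∧ (∀ v, IsZ v → IsZ (w⁻¹ v)) := by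
  refine Subgroup.closure_induction ?mem ?one ?mul ?inv hw
  · rintro x ⟨k, hk, rfl⟩
    have hcoord : ∀ v m, m ∉ Y → s k v m = v m := by
      intro v m hm
      rw [hs k v]
      have : sr k m = 0 := sr_ne (fun h => hm (h ▸ hk))
      simp [this]
    have hz : ∀ v, IsZ v → IsZ (s k v) := by
      intro v hv m
      rw [hs k v]
      have hc : ∃ z : ℤ, ∑ j, v j * (A k j : ℚ) = z := by
        choose z hz' using hv
        exact ⟨∑ j, z j * A k j, by push_cast [hz']; rfl⟩
      obtain ⟨zc, hzc⟩ := hc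
      obtain ⟨zm, hzm⟩ := hv m
      obtain ⟨zs, hzs⟩ := isZ_sr k m
      exact ⟨zm - zc * zs, by push_cast [← hzm, ← hzc, ← hzs]; simp [smul_eq_mul]⟩
    refine ⟨hB.2.2.2 k, hcoord, hz, ?_⟩
    rw [s_inv hA hs k]
    exact hz
  · exact ⟨fun u v => rfl, fun v m _ => rfl, fun v h => h, fun v h => by rwa [inv_one]⟩
  · rintro x y - - ⟨hxB, hxc, hxz, hxzi⟩ ⟨hyB, hyc, hyz, hyzi⟩
    refine ⟨fun u v => by rw [mul_apply', mul_apply', hxB, hyB],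
      fun v m hm => by rw [mul_apply', hxc _ m hm, hyc _ m hm],
      fun v h => by rw [mul_apply']; exact hxz _ (hyz _ h),
      fun v h => by rw [mul_inv_rev, mul_apply']; exact hyzi _ (hxzi _ h)⟩
  · rintro x - ⟨hxB, hxc, hxz, hxzi⟩
    refine ⟨fun u v => ?_, fun v m hm => ?_, fun v h => hxzi v h, fun v h => by rw [inv_inv]; exact hxz _ h⟩
    · conv_rhs => rw [← apply_inv_apply x u, ← apply_inv_apply x v]
      rw [hxB]
    · conv_rhs => rw [← apply_inv_apply x v]
      rw [hxc (x⁻¹ v) m hm]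

/-- M-matrix / Stieltjes lemma: positive definite Gram with nonpositive off-diagonal
entries has "inverse-positivity". -/
lemma mlem (hA : IsGCM A) (hB : IsInvForm A ε B s) (Y : Finset I)
    (hpos : ∀ v : I → ℚ, (∀ m, m ∉ Y → v m = 0) → v ≠ 0 → 0 < B v v)
    (x : I → ℚ) (hx : ∀ m, m ∉ Y → x m = 0)
    (hge : ∀ k, k ∈ Y → 0 ≤ B x (sr k)) : ∀ k, 0 ≤ x k := by
  classical
  set xp : I → ℚ := fun m => max (x m) 0 with hxp
  set xm : I → ℚ := fun m => max (-x m) 0 with hxm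
  have hxfun : x = xp - xm := by
    funext m
    simp only [hxp, hxm, Pi.sub_apply]
    rcases le_total (x m) 0 with h | h
    · rw [max_eq_right h, max_eq_left (by linarith)]; ring
    · rw [max_eq_left h, max_eq_right (by linarith)]; ring
  have hxm_nonneg : ∀ m, 0 ≤ xm m := fun m => le_max_right _ _
  have hxp_nonneg : ∀ m, 0 ≤ xp m := fun m => le_max_right _ _
  have hxm_supp : ∀ m, m ∉ Y → xm m = 0 := by
    intro m hm; simp [hxm, hx m hm]
  have h1 : 0 ≤ B xm x := by
    rw [bexpL B xm x]
    refine Finset.sum_nonneg fun k _ => ?_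
    by_cases hk : k ∈ Y
    · exact mul_nonneg (hxm_nonneg k) (by rw [hB.2.1]; exact hge k hk)
    · rw [hxm_supp k hk]; simp
  have h2 : B xm xp ≤ 0 := by
    rw [bexp B xm xp]
    refine Finset.sum_nonpos fun k _ => Finset.sum_nonpos fun l _ => ?_
    by_cases hkl : k = l
    · subst hkl
      have : xm k * xp k = 0 := by
        simp only [hxm, hxp]
        rcases le_total (x k) 0 with h | h
        · rw [max_eq_right h]; ring
        · rw [max_eq_right (by linarith : -x k ≤ 0)]; ring
      rw [this]; simp
    · have hBkl : B (sr k) (sr l) ≤ 0 := by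
        rw [hB.2.2.1]
        have := hA.2.1 k l hkl
        have hAq : (A k l : ℚ) ≤ 0 := by exact_mod_cast this
        exact mul_nonpos_of_nonneg_of_nonpos (le_of_lt (hB.1 k)) hAq
      have := mul_nonneg (hxm_nonneg k) (hxp_nonneg l)
      nlinarith
  have h3 : B xm xm ≤ 0 := by
    have : B xm x = B xm xp - B xm xm := by rw [hxfun]; simp [map_sub]
    linarith
  have hxm0 : xm = 0 := by
    by_contra hne
    exact absurd (hpos xm hxm_supp hne) (by linarith)
  intro k
  have : xm k = 0 := by rw [hxm0]; rfl
  simp only [hxm] at this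
  have : -x k ≤ 0 := by
    by_contra hlt
    push_neg at hlt
    rw [max_eq_left (le_of_lt hlt)] at this
    linarith
  linarith

lemma s_sr (hA : IsGCM A) (hs : IsReflRep A s) (k : I) : s k (sr k) = -(sr k) := by
  rw [hs k]
  have : ∑ j, sr k j * (A k j : ℚ) = 2 := by
    rw [sum_sr_mul]; exact_mod_cast congrArg Int.cast (hA.1 k)
  rw [this]
  ext m; simp [smul_eq_mul]; ring

/-- If the parabolic is finite, the form B is positive definite on the span of the
corresponding simple roots. -/
lemma pd_of_finite (hA : IsGCM A) (hs : IsReflRep A s) (hB : IsInvForm A ε B s)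
    (Y : Finset I) (hfin : Finite (Wpara s (Y : Set I))) :
    ∀ v : I → ℚ, (∀ m, m ∉ Y → v m = 0) → v ≠ 0 → 0 < B v v := by
  classical
  haveI : Fintype (Wpara s (Y : Set I)) := Fintype.ofFinite _
  haveI : Nonempty (Wpara s (Y : Set I)) := ⟨1⟩
  set W := Wpara s (Y : Set I) with hW
  let Bt : (I → ℚ) →ₗ[ℚ] (I → ℚ) →ₗ[ℚ] ℚ := LinearMap.mk₂ ℚ
    (fun u v => ∑ w : W, ∑ m, w.1 u m * w.1 v m)
    (fun u u' v => by
      simp only [map_add]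
      rw [← Finset.sum_add_distrib]
      refine Finset.sum_congr rfl fun w _ => ?_
      rw [← Finset.sum_add_distrib]
      refine Finset.sum_congr rfl fun m _ => ?_
      simp [add_mul])
    (fun c u v => by
      simp only [map_smul, Finset.smul_sum]
      refine Finset.sum_congr rfl fun w _ => ?_
      refine Finset.sum_congr rfl fun m _ => ?_
      simp [smul_eq_mul]; ring)
    (fun u v v' => by
      rw [← Finset.sum_add_distrib]
      refine Finset.sum_congr rfl fun w _ => ?_
      simp only [map_add]
      rw [← Finset.sum_add_distrib]
      refine Finset.sum_congr rfl fun m _ => ?_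
      simp [mul_add])
    (fun c u v => by
      simp only [map_smul, Finset.smul_sum]
      refine Finset.sum_congr rfl fun w _ => ?_
      refine Finset.sum_congr rfl fun m _ => ?_
      simp [smul_eq_mul]; ring)
  have hBt_apply : ∀ u v, Bt u v = ∑ w : W, ∑ m, w.1 u m * w.1 v m := fun u v => rfl
  have hBt_symm : ∀ u v, Bt u v = Bt v u := by
    intro u v
    rw [hBt_apply, hBt_apply]
    exact Finset.sum_congr rfl fun w _ => Finset.sum_congr rfl fun m _ => mul_comm _ _
  have hBt_pos : ∀ v : I → ℚ, v ≠ 0 → 0 < Bt v v := by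
    intro v hv
    rw [hBt_apply]
    refine Finset.sum_pos (fun w _ => ?_) Finset.univ_nonempty
    have hwv : w.1 v ≠ 0 := fun h => hv (by
      have := congrArg w.1.symm h
      simpa using this)
    have : ∃ m, w.1 v m ≠ 0 := by
      by_contra hc; push_neg at hc; exact hwv (funext fun m => hc m)
    obtain ⟨m₀, hm₀⟩ := this
    refine Finset.sum_pos' (fun m _ => mul_self_nonneg _) ⟨m₀, Finset.mem_univ _, ?_⟩
    exact mul_self_pos.mpr hm₀
  have hBt_inv : ∀ w₀ : W, ∀ u v, Bt (w₀.1 u) (w₀.1 v) = Bt u v := by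
    intro w₀ u v
    rw [hBt_apply, hBt_apply]
    exact Fintype.sum_equiv (Equiv.mulRight w₀)
      (fun w => ∑ m, w.1 (w₀.1 u) m * w.1 (w₀.1 v) m)
      (fun w => ∑ m, w.1 u m * w.1 v m) (fun w => rfl)
  have hrefl : ∀ k, k ∈ Y → ∀ v : I → ℚ,
      (∑ j, v j * (A k j : ℚ)) * Bt (sr k) (sr k) = 2 * Bt v (sr k) := by
    intro k hk v
    have hmem : s k ∈ W := Subgroup.subset_closure ⟨k, hk, rfl⟩
    have h := hBt_inv ⟨s k, hmem⟩ v (sr k)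
    simp only at h
    rw [hs k v, s_sr hA hs k] at h
    simp only [map_sub, map_smul, map_neg, LinearMap.sub_apply, LinearMap.smul_apply,
      LinearMap.neg_apply, smul_eq_mul] at h
    linarith [h]
  have hdpos : ∀ m, 0 < Bt (sr m) (sr m) := fun m => hBt_pos (sr m) (sr_ne_zero m)
  set r : I → ℚ := fun m => 2 * ε m / Bt (sr m) (sr m) with hr
  have hrpos : ∀ m, 0 < r m := fun m => by
    rw [hr]; exact div_pos (by linarith [hB.1 m]) (hdpos m)
  have hkey : ∀ k, k ∈ Y → ∀ l, B (sr k) (sr l) = r k * Bt (sr k) (sr l) := by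
    intro k hk l
    have h := hrefl k hk (sr l)
    rw [sum_sr_mul] at h
    rw [hB.2.2.1, hr]
    have hd := hdpos k
    rw [hBt_symm (sr l) (sr k)] at h
    rw [div_mul_eq_mul_div, eq_div_iff (ne_of_gt hd)]
    linear_combination ε k * h
  have hsymm0 : ∀ k, k ∈ Y → ∀ l, l ∈ Y → r k ≠ r l → Bt (sr k) (sr l) = 0 := by
    intro k hk l hl hne
    have h1 := hkey k hk l
    have h2 := hkey l hl k
    have hBsym := hB.2.1 (sr k) (sr l)
    have hBtsym := hBt_symm (sr k) (sr l)
    have : r k * Bt (sr k) (sr l) = r l * Bt (sr k) (sr l) := by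
      rw [← h1, hBsym, h2, ← hBtsym]
    by_contra hBt0
    exact hne (mul_right_cancel₀ hBt0 this)
  intro v hsupp hvne
  set vc : ℚ → (I → ℚ) := fun c m => if r m = c then v m else 0 with hvc
  have hgroup : B v v = ∑ c ∈ Finset.image r Finset.univ, c * Bt (vc c) (vc c) := by
    rw [bexp B v v]
    have hconv : ∀ c ∈ Finset.image r Finset.univ, c * Bt (vc c) (vc c)
        = ∑ k, ∑ l, c * (vc c k * vc c l * Bt (sr k) (sr l)) := by
      intro c _
      rw [bexp Bt, Finset.mul_sum]
      exact Finset.sum_congr rfl fun k _ => by rw [Finset.mul_sum]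
    rw [Finset.sum_congr rfl hconv]
    rw [show (∑ c ∈ Finset.image r Finset.univ, ∑ k, ∑ l,
          c * (vc c k * vc c l * Bt (sr k) (sr l)))
        = ∑ k, ∑ c ∈ Finset.image r Finset.univ, ∑ l,
          c * (vc c k * vc c l * Bt (sr k) (sr l)) from Finset.sum_comm]
    refine Finset.sum_congr rfl fun k _ => ?_
    rw [show (∑ c ∈ Finset.image r Finset.univ, ∑ l,
          c * (vc c k * vc c l * Bt (sr k) (sr l)))
        = ∑ l, ∑ c ∈ Finset.image r Finset.univ,
          c * (vc c k * vc c l * Bt (sr k) (sr l)) from Finset.sum_comm]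
    refine Finset.sum_congr rfl fun l _ => ?_
    rw [Finset.sum_eq_single (r k) ?_ ?_]
    · simp only [hvc, if_pos rfl]
      by_cases hkY : k ∈ Y
      · by_cases hlY : l ∈ Y
        · by_cases hrkl : r l = r k
          · rw [if_pos hrkl, hkey k hkY l]; ring
          · rw [if_neg hrkl, hkey k hkY l, hsymm0 k hkY l hlY (fun hh => hrkl hh.symm)]; ring
        · rw [hsupp l hlY]
          by_cases hrkl : r l = r k <;> simp [hrkl]
      · rw [hsupp k hkY]; simp
    · intro b _ hb
      simp only [hvc]
      rw [if_neg (fun h => hb h.symm)]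
      ring
    · intro h
      exact absurd (Finset.mem_image_of_mem r (Finset.mem_univ k)) h
  rw [hgroup]
  have hex : ∃ m₀, v m₀ ≠ 0 := by
    by_contra hc; push_neg at hc; exact hvne (funext hc)
  obtain ⟨m₀, hm₀⟩ := hex
  refine Finset.sum_pos' (fun c hc => ?_)
    ⟨r m₀, Finset.mem_image_of_mem r (Finset.mem_univ m₀), ?_⟩
  · obtain ⟨m, -, rfl⟩ := Finset.mem_image.mp hc
    rcases eq_or_ne (vc (r m)) 0 with h0 | h0
    · rw [h0]; simp
    · exact le_of_lt (mul_pos (hrpos m) (hBt_pos _ h0))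
  · have hne0 : vc (r m₀) ≠ 0 := fun h => hm₀ (by
      have := congrFun h m₀
      simpa [hvc] using this)
    exact mul_pos (hrpos m₀) (hBt_pos _ hne0)

lemma B_sr_self (hA : IsGCM A) (hB : IsInvForm A ε B s) (k : I) :
    B (sr k) (sr k) = 2 * ε k := by
  rw [hB.2.2.1 k k, hA.1 k]; push_cast; ring

/-- If `B` is positive definite on the span of the `Y`-simple roots, the parabolic `W_Y`
is finite. -/
lemma finite_of_pd (hA : IsGCM A) (hs : IsReflRep A s) (hB : IsInvForm A ε B s)
    (Y : Finset I)
    (hpos : ∀ v : I → ℚ, (∀ m, m ∉ Y → v m = 0) → v ≠ 0 → 0 < B v v) :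
    Finite (Wpara s (Y : Set I)) := by
  classical
  -- Cauchy-Schwarz on the Y-span
  have hCS : ∀ u : I → ℚ, (∀ m, m ∉ Y → u m = 0) → ∀ l, l ∈ Y →
      (B u (sr l))^2 ≤ B u u * B (sr l) (sr l) := by
    intro u hu l hl
    rcases eq_or_ne u 0 with rfl | hne
    · simp
    · have ht : 0 < B u u := hpos u hu hne
      set t := B u u with hteq
      set q := B u (sr l) with hq
      set z : I → ℚ := t • sr l - q • u with hz
      have hzsupp : ∀ m, m ∉ Y → z m = 0 := by
        intro m hm
        have : sr l m = 0 := sr_ne (fun h => hm (h ▸ hl))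
        simp [hz, this, hu m hm]
      have hzz : 0 ≤ B z z := by
        rcases eq_or_ne z 0 with h0 | h0
        · rw [h0]; simp
        · exact le_of_lt (hpos z hzsupp h0)
      have hexp : B z z = t * (t * B (sr l) (sr l) - q^2) := by
        rw [hz]
        simp only [map_sub, map_smul, LinearMap.sub_apply, LinearMap.smul_apply, smul_eq_mul]
        have hsym : B (sr l) u = B u (sr l) := hB.2.1 _ _
        rw [hsym, ← hq, ← hteq]
        ring
      nlinarith [hzz, hexp, ht]
  -- vanishing criterion
  have hzero : ∀ u : I → ℚ, (∀ m, m ∉ Y → u m = 0) → (∀ l, l ∈ Y → B u (sr l) = 0) →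
      u = 0 := by
    intro u hu h0
    by_contra hne
    have hBuu : B u u = 0 := by
      rw [bexpR B u u]
      refine Finset.sum_eq_zero fun l _ => ?_
      by_cases hl : l ∈ Y
      · rw [h0 l hl]; ring
      · rw [hu l hl]; ring
    have := hpos u hu hne
    rw [hBuu] at this
    exact lt_irrefl 0 this
  -- common denominator
  set N : ℕ := ∏ m, (ε m).den with hN
  have hNne : (N : ℚ) ≠ 0 := by
    rw [hN]
    push_cast
    refine Finset.prod_ne_zero_iff.mpr fun m _ => ?_
    exact_mod_cast (ε m).den_nz
  have hεN : ∀ m, ∃ z : ℤ, ε m * (N:ℚ) = (z:ℚ) := by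
    intro m
    obtain ⟨c, hc⟩ := Finset.dvd_prod_of_mem (fun m => (ε m).den) (Finset.mem_univ m)
    refine ⟨(ε m).num * c, ?_⟩
    have hcast : (N:ℚ) = ((ε m).den : ℚ) * c := by rw [hN]; exact_mod_cast congrArg Nat.cast hc
    have hden : ((ε m).den : ℚ) ≠ 0 := Nat.cast_ne_zero.mpr (ε m).den_nz
    have hnum : ε m * ((ε m).den : ℚ) = ((ε m).num : ℚ) := by
      have hh := Rat.num_div_den (ε m)
      nth_rewrite 1 [← hh]
      rw [div_mul_cancel₀ _ hden]
    rw [hcast]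
    push_cast
    rw [← mul_assoc, hnum]
  have hint : ∀ v : I → ℚ, IsZ v → ∀ l, ∃ z : ℤ, B v (sr l) * N = (z:ℚ) := by
    intro v hv l
    choose zv hzv using hv
    choose zε hzε using hεN
    refine ⟨∑ k, zv k * zε k * A k l, ?_⟩
    rw [bexpL B v (sr l), Finset.sum_mul]
    push_cast
    refine Finset.sum_congr rfl fun k _ => ?_
    rw [hB.2.2.1, hzv k, ← hzε k]
    ring
  -- bound
  set E : ℚ := ∑ m, ε m with hE
  have hEbd : ∀ m, ε m ≤ E := fun m =>
    Finset.single_le_sum (fun m _ => le_of_lt (hB.1 m)) (Finset.mem_univ m)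
  have hEnn : 0 ≤ E := Finset.sum_nonneg fun m _ => le_of_lt (hB.1 m)
  have hNnn : (0:ℚ) ≤ N := by positivity
  set z₀ : ℤ := ⌈2 * E * (N:ℚ)⌉ with hz₀def
  have hz₀nn : 0 ≤ z₀ := Int.ceil_nonneg (by positivity)
  have hmemIcc : ∀ w : (I → ℚ) ≃ₗ[ℚ] (I → ℚ), w ∈ Wpara s (Y : Set I) →
      ∀ k, k ∈ Y → ∀ l, l ∈ Y →
      (B (w (sr k)) (sr l) * N).num ∈ Finset.Icc (-z₀) z₀ := by
    intro w hw k hk l hl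
    obtain ⟨hBw, hcoord, hZ, -⟩ := wpara_master hA hs hB _ hw
    have hsupvk : ∀ m, m ∉ Y → w (sr k) m = 0 := by
      intro m hm
      rw [hcoord (sr k) m (by simpa using hm)]
      exact sr_ne (fun h => hm (h ▸ hk))
    have hq := hCS (w (sr k)) hsupvk l hl
    rw [hBw (sr k) (sr k), B_sr_self hA hB k, B_sr_self hA hB l] at hq
    obtain ⟨z, hz⟩ := hint (w (sr k)) (hZ (sr k) (isZ_sr k)) l
    have hnum : (B (w (sr k)) (sr l) * N).num = z := by rw [hz, Rat.num_intCast]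
    rw [hnum]
    have hzsq : ((z:ℚ))^2 ≤ (2 * E * N)^2 := by
      have h1 : ((z:ℚ))^2 = (B (w (sr k)) (sr l))^2 * N^2 := by rw [← hz]; ring
      have h2 : ε k ≤ E := hEbd k
      have h3 : ε l ≤ E := hEbd l
      have h4 : 0 < ε k := hB.1 k
      have h5 : 0 < ε l := hB.1 l
      rw [h1]
      have hN2 : (0:ℚ) ≤ N^2 := by positivity
      calc (B (w (sr k)) (sr l))^2 * N^2 ≤ (2 * ε k * (2 * ε l)) * N^2 := by
            exact mul_le_mul_of_nonneg_right hq hN2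
        _ ≤ (2 * E * (2 * E)) * N^2 := by
            have h6 : ε k * ε l ≤ E * E := mul_le_mul h2 h3 (le_of_lt h5) hEnn
            nlinarith [h6, hN2]
        _ = (2 * E * N)^2 := by ring
    obtain ⟨hlb, hub⟩ := abs_le_of_sq_le_sq' hzsq (by positivity)
    refine Finset.mem_Icc.mpr ⟨?_, ?_⟩
    · have : -(z₀:ℚ) ≤ (z:ℚ) := le_trans (by
        have := Int.le_ceil (2 * E * (N:ℚ))
        rw [← hz₀def] at this
        linarith) hlb
      exact_mod_cast this
    · have : (z:ℚ) ≤ (z₀:ℚ) := le_trans hub (by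
        have := Int.le_ceil (2 * E * (N:ℚ))
        rw [← hz₀def] at this
        linarith)
      exact_mod_cast this
  classical
  set f : Wpara s (Y : Set I) → (I → I → {x // x ∈ Finset.Icc (-z₀) z₀}) := fun w k l =>
    if h : k ∈ Y ∧ l ∈ Y then ⟨(B (w.1 (sr k)) (sr l) * N).num, hmemIcc w.1 w.2 k h.1 l h.2⟩
    else ⟨0, Finset.mem_Icc.mpr ⟨by linarith, hz₀nn⟩⟩ with hf
  refine Finite.of_injective f ?_
  intro w w' hff
  have hval : ∀ k, k ∈ Y → ∀ l, l ∈ Y → B (w.1 (sr k)) (sr l) = B (w'.1 (sr k)) (sr l) := by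
    intro k hk l hl
    have h1 := congrFun (congrFun hff k) l
    rw [hf] at h1
    simp only [dif_pos (show k ∈ Y ∧ l ∈ Y from ⟨hk, hl⟩)] at h1
    have hnum : (B (w.1 (sr k)) (sr l) * N).num = (B (w'.1 (sr k)) (sr l) * N).num :=
      congrArg Subtype.val h1
    obtain ⟨-, -, hZ, -⟩ := wpara_master hA hs hB _ w.2
    obtain ⟨-, -, hZ', -⟩ := wpara_master hA hs hB _ w'.2
    obtain ⟨z, hz⟩ := hint (w.1 (sr k)) (hZ (sr k) (isZ_sr k)) l
    obtain ⟨z', hz'⟩ := hint (w'.1 (sr k)) (hZ' (sr k) (isZ_sr k)) l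
    rw [hz, hz', Rat.num_intCast, Rat.num_intCast] at hnum
    have : B (w.1 (sr k)) (sr l) * N = B (w'.1 (sr k)) (sr l) * N := by
      rw [hz, hz', hnum]
    exact mul_right_cancel₀ hNne this
  obtain ⟨hBw, hcw, -, -⟩ := wpara_master hA hs hB _ w.2
  obtain ⟨hBw', hcw', -, -⟩ := wpara_master hA hs hB _ w'.2
  have hkeq : ∀ k, k ∈ Y → w.1 (sr k) = w'.1 (sr k) := by
    intro k hk
    have hsub : ∀ m, m ∉ Y → (w.1 (sr k) - w'.1 (sr k)) m = 0 := by
      intro m hm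
      have e1 := hcw (sr k) m (by simpa using hm)
      have e2 := hcw' (sr k) m (by simpa using hm)
      simp [Pi.sub_apply, e1, e2]
    have hdz : w.1 (sr k) - w'.1 (sr k) = 0 := by
      refine hzero _ hsub fun l hl => ?_
      rw [map_sub, LinearMap.sub_apply, hval k hk l hl]
      ring
    exact sub_eq_zero.mp hdz
  set g := w'⁻¹ * w with hg
  obtain ⟨hBg, hcg, -, -⟩ := wpara_master hA hs hB _ g.2
  have hgfix : ∀ k, k ∈ Y → g.1 (sr k) = sr k := by
    intro k hk
    have : g.1 (sr k) = (w'.1)⁻¹ (w.1 (sr k)) := by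
      rw [hg]
      simp [mul_apply']
    rw [this, hkeq k hk, inv_apply_apply]
  have hallm : ∀ m, g.1 (sr m) = sr m := by
    intro m
    have hsub : ∀ m', m' ∉ Y → (g.1 (sr m) - sr m) m' = 0 := by
      intro m' hm'
      have e1 := hcg (sr m) m' (by simpa using hm')
      simp [Pi.sub_apply, e1]
    have hdz : g.1 (sr m) - sr m = 0 := by
      refine hzero _ hsub fun l hl => ?_
      have h1 : B (g.1 (sr m)) (sr l) = B (g.1 (sr m)) (g.1 (sr l)) := by rw [hgfix l hl]
      rw [map_sub, LinearMap.sub_apply, h1, hBg]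
      ring
    exact sub_eq_zero.mp hdz
  have hg1 : g = 1 := by
    refine Subtype.ext ?_
    refine DFunLike.ext _ _ fun v => ?_
    have : g.1 v = g.1 (∑ m, v m • sr m) := by rw [sum_sr]
    rw [this, map_sum]
    simp only [map_smul, hallm]
    rw [sum_sr]
    rfl
  rw [hg] at hg1
  exact (inv_mul_eq_one.mp hg1).symm

/-- vanishing criterion on the `Y`-span, from positive definiteness -/
lemma zero_of_pd (hB : IsInvForm A ε B s) (Y : Finset I)
    (hpos : ∀ v : I → ℚ, (∀ m, m ∉ Y → v m = 0) → v ≠ 0 → 0 < B v v)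
    (u : I → ℚ) (hu : ∀ m, m ∉ Y → u m = 0) (h0 : ∀ l, l ∈ Y → B u (sr l) = 0) :
    u = 0 := by
  by_contra hne
  have hBuu : B u u = 0 := by
    rw [bexpR B u u]
    refine Finset.sum_eq_zero fun l _ => ?_
    by_cases hl : l ∈ Y
    · rw [h0 l hl]; ring
    · rw [hu l hl]; ring
  have := hpos u hu hne
  rw [hBuu] at this
  exact lt_irrefl 0 this

/-- a vector orthogonal to all `Y`-roots pairs to zero with any `Y`-supported vector -/
lemma perp_supp (u x : I → ℚ) (Y : Finset I)
    (hu : ∀ k, k ∈ Y → B u (sr k) = 0) (hx : ∀ m, m ∉ Y → x m = 0) :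
    B u x = 0 := by
  rw [bexpR B u x]
  refine Finset.sum_eq_zero fun l _ => ?_
  by_cases hl : l ∈ Y
  · rw [hu l hl]; ring
  · rw [hx l hl]; ring

lemma bexp_img (F : (I → ℚ) →ₗ[ℚ] (I → ℚ) →ₗ[ℚ] ℚ) (φ : I → I) (u v : I → ℚ) :
    F (∑ a, u a • sr (φ a)) (∑ b, v b • sr (φ b))
      = ∑ a, ∑ b, u a * v b * F (sr (φ a)) (sr (φ b)) := by
  have h1 : F (∑ a, u a • sr (φ a)) (∑ b, v b • sr (φ b))
      = ∑ a, u a * F (sr (φ a)) (∑ b, v b • sr (φ b)) := by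
    rw [show F (∑ a, u a • sr (φ a)) = ∑ a, F (u a • sr (φ a)) from
      map_sum F _ Finset.univ, LinearMap.sum_apply]
    exact Finset.sum_congr rfl fun a _ => by
      rw [map_smul, LinearMap.smul_apply, smul_eq_mul]
  rw [h1]
  refine Finset.sum_congr rfl fun a _ => ?_
  have h2 : F (sr (φ a)) (∑ b, v b • sr (φ b)) = ∑ b, v b * F (sr (φ a)) (sr (φ b)) := by
    rw [map_sum]
    exact Finset.sum_congr rfl fun b _ => by rw [map_smul, smul_eq_mul]
  rw [h2, Finset.mul_sum]
  exact Finset.sum_congr rfl fun b _ => by ring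

end ctx

end Aux

set_option maxHeartbeats 1600000 in
/-- Let `(X, τ)` be a compatible decoration, `σ = w_X ∘ τ`, and `I*` a set of representatives
of the `τ`-orbits on `I \ X`.  For `i, j ∈ I*`, the inner product `(ᾱᵢ, ᾱⱼ)` is strictly
positive if and only if `i = j` and `X[i] = X ∪ {i, τ i}` is of finite type; otherwise it is
nonpositive. -/
theorem restricted_simple_roots_inner_products {I : Type} [Fintype I] [DecidableEq I]
    (A : I → I → ℤ) (hA : IsGCM A)
    (s : I → ((I → ℚ) ≃ₗ[ℚ] (I → ℚ))) (hs : IsReflRep A s)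
    (ε : I → ℚ) (B : (I → ℚ) →ₗ[ℚ] (I → ℚ) →ₗ[ℚ] ℚ) (hB : IsInvForm A ε B s)
    (X : Finset I) (τ : Equiv.Perm I) (tV wX : (I → ℚ) ≃ₗ[ℚ] (I → ℚ))
    (hcd : IsCompatibleDec A s ↑X τ tV wX)
    (Istar : Finset I) (hIstar : IsOrbitReps X τ Istar) :
    ∀ i ∈ Istar, ∀ j ∈ Istar,
      (0 < B (bar (σmap wX tV) (sr i)) (bar (σmap wX tV) (sr j)) ↔
        (i = j ∧ Finite (Wpara s ↑(insert i (insert (τ i) X))))) ∧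
      (¬ (i = j ∧ Finite (Wpara s ↑(insert i (insert (τ i) X)))) →
        B (bar (σmap wX tV) (sr i)) (bar (σmap wX tV) (sr j)) ≤ 0) := by
  classical
  have hA2 := hA.1
  have hAoff := hA.2.1
  have hεpos := hB.1
  have hsym := hB.2.1
  have hBsr := hB.2.2.1
  have hAτ := hcd.1
  have hττ := hcd.2.1
  have hτXset := hcd.2.2.1
  have htV := hcd.2.2.2.1
  have hfinX := hcd.2.2.2.2.1
  have hwXmem := hcd.2.2.2.2.2.1
  have hwX2 := hcd.2.2.2.2.2.2.1
  have hwXsrset := hcd.2.2.2.2.2.2.2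
  have hIX := hIstar.1
  have hrep := hIstar.2.2
  have hτX : ∀ k, k ∈ X → τ k ∈ X := fun k hk => by
    have := hτXset k (by simpa using hk); simpa using this
  have hwXsr : ∀ k, k ∈ X → wX (sr k) = - sr (τ k) := fun k hk =>
    hwXsrset k (by simpa using hk)
  have hτnX : ∀ m, m ∉ X → τ m ∉ X := fun m hm hc => hm (by
    have := hτX _ hc; rwa [hττ m] at this)
  obtain ⟨hBwX, hcX, -, -⟩ := wpara_master hA hs hB _ hwXmem
  have hcX' : ∀ v : I → ℚ, ∀ m, m ∉ X → wX v m = v m := fun v m hm =>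
    hcX v m (by simpa using hm)
  have hwXwX : ∀ v, wX (wX v) = v := fun v => by
    have h1 : (wX * wX) v = (1 : (I → ℚ) ≃ₗ[ℚ] (I → ℚ)) v := by rw [hwX2]
    rwa [mul_apply', one_apply'] at h1
  have hBwX1 : ∀ u v, B (wX u) v = B u (wX v) := fun u v => by
    calc B (wX u) v = B (wX u) (wX (wX v)) := by rw [hwXwX]
      _ = B u (wX v) := hBwX _ _
  have hAτ' : ∀ a b, A (τ a) b = A a (τ b) := fun a b => by
    have h1 := hAτ a (τ b); rwa [hττ b] at h1
  have hAq : ∀ p q, p ≠ q → (A p q : ℚ) ≤ 0 := fun p q h => by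
    exact_mod_cast hAoff p q h
  have posX : ∀ v : I → ℚ, (∀ m, m ∉ X → v m = 0) → v ≠ 0 → 0 < B v v :=
    pd_of_finite hA hs hB X hfinX
  have zeroX := zero_of_pd hB X posX
  have hεX : ∀ k, k ∈ X → ε (τ k) = ε k := by
    intro k hk
    have h1 : B (sr (τ k)) (sr (τ k)) = B (sr k) (sr k) := by
      calc B (sr (τ k)) (sr (τ k)) = B (- sr (τ k)) (- sr (τ k)) := by simp
        _ = B (wX (sr k)) (wX (sr k)) := by rw [hwXsr k hk]
        _ = B (sr k) (sr k) := hBwX _ _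
    rw [B_sr_self hA hB, B_sr_self hA hB] at h1
    linarith
  have hee : ∀ a b, (b ∈ X ∨ b = τ a) → ε (τ a) * (A a b : ℚ) = ε a * (A a b : ℚ) := by
    intro a b hb
    rcases hb with hb | rfl
    · calc ε (τ a) * (A a b : ℚ) = ε (τ a) * (A (τ a) (τ b) : ℚ) := by rw [hAτ]
        _ = B (sr (τ a)) (sr (τ b)) := (hBsr _ _).symm
        _ = B (sr (τ b)) (sr (τ a)) := hsym _ _
        _ = ε (τ b) * (A (τ b) (τ a) : ℚ) := hBsr _ _
        _ = ε b * (A (τ b) (τ a) : ℚ) := by rw [hεX b hb]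
        _ = ε b * (A b a : ℚ) := by rw [hAτ]
        _ = B (sr b) (sr a) := (hBsr _ _).symm
        _ = B (sr a) (sr b) := hsym _ _
        _ = ε a * (A a b : ℚ) := hBsr _ _
    · calc ε (τ a) * (A a (τ a) : ℚ) = ε (τ a) * (A (τ a) a : ℚ) := by rw [hAτ' a a]
        _ = B (sr (τ a)) (sr a) := (hBsr _ _).symm
        _ = B (sr a) (sr (τ a)) := hsym _ _
        _ = ε a * (A a (τ a) : ℚ) := hBsr _ _
  -- the `X`-part of `wX (sr m) - sr m` for `m ∉ X` has nonnegative coordinates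
  have hwvec : ∀ m, m ∉ X →
      (∀ m', m' ∉ X → (wX (sr m) - sr m) m' = 0) ∧ (∀ k, 0 ≤ (wX (sr m) - sr m) k) := by
    intro m hm
    have hsupp : ∀ m', m' ∉ X → (wX (sr m) - sr m) m' = 0 := by
      intro m' hm'
      simp [Pi.sub_apply, hcX' (sr m) m' hm']
    refine ⟨hsupp, mlem hA hB X posX _ hsupp ?_⟩
    intro k hk
    have h1 : B (wX (sr m)) (sr k) = -(ε m * (A m (τ k) : ℚ)) := by
      rw [hBwX1, hwXsr k hk, (B (sr m)).map_neg, hBsr]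
    have h2 : B (wX (sr m) - sr m) (sr k)
        = -(ε m * (A m (τ k) : ℚ)) - ε m * (A m k : ℚ) := by
      rw [map_sub, LinearMap.sub_apply, h1, hBsr]
    rw [h2]
    have h3 : (A m (τ k) : ℚ) ≤ 0 := hAq m (τ k) (fun h => hm (h ▸ hτX k hk))
    have h4 : (A m k : ℚ) ≤ 0 := hAq m k (fun h => hm (h ▸ hk))
    have h5 := hεpos m
    nlinarith
  have hBneg : ∀ p, p ∉ X → ∀ m, m ∉ X → p ≠ m → B (sr p) (wX (sr m)) ≤ 0 := by
    intro p hp m hm hpm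
    obtain ⟨hxsupp, hxnn⟩ := hwvec m hm
    have hdecomp : wX (sr m) = sr m + (wX (sr m) - sr m) := by abel
    rw [hdecomp, map_add]
    have h1 : B (sr p) (sr m) ≤ 0 := by
      rw [hBsr]
      have := hAq p m hpm
      nlinarith [hεpos p]
    have h2 : B (sr p) (wX (sr m) - sr m) ≤ 0 := by
      rw [bexpR B (sr p) _]
      refine Finset.sum_nonpos fun l _ => ?_
      by_cases hl : l ∈ X
      · have ha : B (sr p) (sr l) ≤ 0 := by
          rw [hBsr]
          have := hAq p l (fun h => hp (h ▸ hl))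
          nlinarith [hεpos p]
        exact mul_nonpos_of_nonneg_of_nonpos (hxnn l) ha
      · rw [hxsupp l hl]; simp
    linarith
  have hbar : ∀ m, bar (σmap wX tV) (sr m) = (2⁻¹ : ℚ) • (sr m + wX (sr (τ m))) := by
    intro m
    simp only [bar, σmap, htV]
  intro i hi j hj
  have hiX : i ∉ X := hIX i hi
  have hjX : j ∉ X := hIX j hj
  have hτiX : τ i ∉ X := hτnX i hiX
  have hτjX : τ j ∉ X := hτnX j hjX
  by_cases hij : i = j
  · subst hij
    set J : Finset I := insert i (insert (τ i) X) with hJ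
    have hJm : ∀ m, m ∈ J ↔ (m = i ∨ m = τ i ∨ m ∈ X) := by
      intro m; simp [hJ, Finset.mem_insert]
    have hbar_i := hbar i
    set γ : I → ℚ := (2⁻¹ : ℚ) • (sr i + wX (sr (τ i))) with hγ
    have hγco : ∀ m, γ m = 2⁻¹ * (sr i m + (wX (sr (τ i))) m) := by
      intro m; rw [hγ]; simp [smul_eq_mul]
    have hγsupp : ∀ m, m ∉ J → γ m = 0 := by
      intro m hm
      rw [hJm] at hm; push_neg at hm
      obtain ⟨h1, h2, h3⟩ := hm
      rw [hγco, hcX' _ m h3, sr_ne h1, sr_ne h2]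
      ring
    have hγi_pos : 0 < γ i := by
      rw [hγco, hcX' _ i hiX, sr_self]
      rcases eq_or_ne i (τ i) with h | h
      · rw [← h, sr_self]; norm_num
      · rw [sr_ne h]; norm_num
    have hγne : γ ≠ 0 := by
      intro h
      rw [h] at hγi_pos
      simp at hγi_pos
    have hγperpX : ∀ k, k ∈ X → B γ (sr k) = 0 := by
      intro k hk
      have h1 : B (wX (sr (τ i))) (sr k) = -(ε (τ i) * (A (τ i) (τ k) : ℚ)) := by
        rw [hBwX1, hwXsr k hk, (B (sr (τ i))).map_neg, hBsr]
      have h2 : (A (τ i) (τ k) : ℚ) = (A i k : ℚ) := by exact_mod_cast hAτ i k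
      have h3 : ε (τ i) * (A i k : ℚ) = ε i * (A i k : ℚ) := hee i k (Or.inl hk)
      rw [hγ]
      simp only [map_smul, map_add, LinearMap.smul_apply, LinearMap.add_apply, smul_eq_mul]
      rw [h1, h2, hBsr]
      linarith
    have hdir1 : Finite (Wpara s (J : Set I)) → 0 < B γ γ := fun hfin =>
      pd_of_finite hA hs hB J hfin γ hγsupp hγne
    have hdir2 : 0 < B γ γ → Finite (Wpara s (J : Set I)) := by
      intro hγγ
      refine finite_of_pd hA hs hB J ?_
      by_cases hfix : τ i = i
      · -- Case A : τ i = i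
        intro v hv hvne
        have hγii : γ i = 1 := by
          rw [hγco, hcX' _ i hiX, hfix, sr_self]; norm_num
        set t := v i with ht
        set y : I → ℚ := v - t • γ with hy
        have hysupp : ∀ m, m ∉ X → y m = 0 := by
          intro m hm
          by_cases hmi : m = i
          · subst hmi
            rw [hy]
            simp [Pi.sub_apply, smul_eq_mul, hγii, ht]
          · have hmJ : m ∉ J := by
              rw [hJm]; push_neg
              exact ⟨hmi, by rw [hfix]; exact hmi, hm⟩
            rw [hy]
            simp [Pi.sub_apply, smul_eq_mul, hv m hmJ, hγsupp m hmJ]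
        have hyγ : B γ y = 0 := perp_supp γ y X hγperpX hysupp
        have hvdec : v = y + t • γ := by rw [hy]; abel
        have hexp : B v v = B y y + t^2 * B γ γ := by
          conv_lhs => rw [hvdec]
          simp only [map_add, map_smul, LinearMap.add_apply, LinearMap.smul_apply, smul_eq_mul]
          rw [hsym y γ, hyγ]
          ring
        by_cases hy0 : y = 0
        · have htne : t ≠ 0 := by
            intro h0
            apply hvne
            rw [hvdec, hy0, h0]
            simp
          rw [hexp, hy0]
          simp only [map_zero, LinearMap.zero_apply]
          have h1 : 0 < t^2 := by positivity
          nlinarith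
        · have h1 : 0 < B y y := posX y hysupp hy0
          have h2 : 0 ≤ t^2 * B γ γ := by nlinarith [sq_nonneg t]
          rw [hexp]
          linarith
      · by_cases hεiq : ε (τ i) = ε i
        · -- Case C : τ i ≠ i, ε (τ i) = ε i
          have hiτ : i ≠ τ i := fun h => hfix h.symm
          -- (1) orthogonal projection data `q`
          have hΦ : ∃ q : I → ℚ, (∀ m, m ∉ X → q m = 0) ∧
              (∀ k, k ∈ X → B q (sr k) = B (sr i - sr (τ i)) (sr k)) := by
            set Φ : (I → ℚ) →ₗ[ℚ] (I → ℚ) :=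
              { toFun := fun u k => if k ∈ X then B u (sr k) else u k
                map_add' := by
                  intro u1 u2
                  funext k
                  by_cases hk : k ∈ X <;>
                    simp [hk, map_add, LinearMap.add_apply]
                map_smul' := by
                  intro c u
                  funext k
                  by_cases hk : k ∈ X <;>
                    simp [hk, map_smul, LinearMap.smul_apply] } with hΦdef
            have hΦap : ∀ u k, Φ u k = if k ∈ X then B u (sr k) else u k := fun u k => rfl
            have hker : ∀ u, Φ u = 0 → u = 0 := by
              intro u hu
              have husupp : ∀ m, m ∉ X → u m = 0 := by
                intro m hm
                have := congrFun hu m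
                rwa [hΦap, if_neg hm] at this
              have huB : ∀ k, k ∈ X → B u (sr k) = 0 := by
                intro k hk
                have := congrFun hu k
                rwa [hΦap, if_pos hk] at this
              exact zeroX u husupp huB
            have hinj : Function.Injective Φ := by
              intro u1 u2 h
              have h0 : Φ (u1 - u2) = 0 := by rw [map_sub, h, sub_self]
              have := hker _ h0
              exact sub_eq_zero.mp this
            obtain ⟨q, hq⟩ := LinearMap.injective_iff_surjective.mp hinj
              (fun k => if k ∈ X then B (sr i - sr (τ i)) (sr k) else 0)
            refine ⟨q, fun m hm => ?_, fun k hk => ?_⟩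
            · have := congrFun hq m
              rwa [hΦap, if_neg hm, if_neg hm] at this
            · have := congrFun hq k
              rwa [hΦap, if_pos hk, if_pos hk] at this
          obtain ⟨q, hqsupp, hqB⟩ := hΦ
          set δ : I → ℚ := sr i - sr (τ i) - q with hδ
          have hδco : ∀ m, δ m = sr i m - sr (τ i) m - q m := by
            intro m; rw [hδ]; simp [Pi.sub_apply]
          have hδsupp : ∀ m, m ∉ J → δ m = 0 := by
            intro m hm
            rw [hJm] at hm; push_neg at hm
            obtain ⟨h1', h2', h3'⟩ := hm
            rw [hδco, sr_ne h1', sr_ne h2', hqsupp m h3']; ring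
          have hδperpX : ∀ k, k ∈ X → B δ (sr k) = 0 := by
            intro k hk
            rw [hδ, map_sub, LinearMap.sub_apply, hqB k hk]
            ring
          have hδi : δ i = 1 := by
            rw [hδco, sr_self, sr_ne hiτ, hqsupp i hiX]; ring
          have hδτi : δ (τ i) = -1 := by
            rw [hδco, sr_self, sr_ne (hfix : τ i ≠ i), hqsupp (τ i) hτiX]; ring
          have hεJ : ∀ a, a ∈ J → ε (τ a) = ε a := by
            intro a haJ
            rw [hJm] at haJ
            rcases haJ with rfl | rfl | ha
            · exact hεiq
            · rw [hττ]; exact hεiq.symm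
            · exact hεX a ha
          have htVsum : ∀ u : I → ℚ, tV u = ∑ a, u a • sr (τ a) := by
            intro u
            conv_lhs => rw [← sum_sr u]
            rw [map_sum]
            exact Finset.sum_congr rfl fun a _ => by rw [map_smul, htV]
          have hLiso : ∀ u u' : I → ℚ, (∀ m, m ∉ J → u m = 0) → (∀ m, m ∉ J → u' m = 0) →
              B (wX (tV u)) (wX (tV u')) = B u u' := by
            intro u u' hu hu'
            rw [hBwX, htVsum u, htVsum u', bexp_img B τ u u', bexp B u u']
            refine Finset.sum_congr rfl fun a _ => Finset.sum_congr rfl fun b _ => ?_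
            by_cases hau : u a = 0
            · rw [hau]; ring
            · by_cases hbu : u' b = 0
              · rw [hbu]; ring
              · have haJ : a ∈ J := by by_contra h; exact hau (hu a h)
                have hiso : B (sr (τ a)) (sr (τ b)) = B (sr a) (sr b) := by
                  rw [hBsr, hBsr, hAτ, hεJ a haJ]
                rw [hiso]
          have hwtVX : ∀ x : I → ℚ, (∀ m, m ∉ X → x m = 0) → wX (tV x) = -x := by
            intro x hx
            have h1 : wX (tV x) = ∑ k, x k • wX (sr (τ k)) := by
              rw [htVsum x, map_sum]
              exact Finset.sum_congr rfl fun k _ => by rw [map_smul]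
            have h2 : ∀ k, x k • wX (sr (τ k)) = -(x k • sr k) := by
              intro k
              by_cases hk : k ∈ X
              · rw [hwXsr (τ k) (hτX k hk), hττ, smul_neg]
              · rw [hx k hk]; simp
            rw [h1, Finset.sum_congr rfl fun k _ => h2 k, Finset.sum_neg_distrib, sum_sr]
          set γ' : I → ℚ := (2⁻¹ : ℚ) • (sr (τ i) + wX (sr i)) with hγ'
          have hγ'co : ∀ m, γ' m = 2⁻¹ * (sr (τ i) m + (wX (sr i)) m) := by
            intro m; rw [hγ']; simp [smul_eq_mul]
          have hγ'perpX : ∀ k, k ∈ X → B γ' (sr k) = 0 := by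
            intro k hk
            have h1 : B (wX (sr i)) (sr k) = -(ε i * (A i (τ k) : ℚ)) := by
              rw [hBwX1, hwXsr k hk, (B (sr i)).map_neg, hBsr]
            have h2 : (A (τ i) k : ℚ) = (A i (τ k) : ℚ) := by exact_mod_cast hAτ' i k
            rw [hγ']
            simp only [map_smul, map_add, LinearMap.smul_apply, LinearMap.add_apply, smul_eq_mul]
            rw [h1, hBsr, h2, hεiq]
            ring
          have hγ'eqγ : γ' = γ := by
            have hd_supp : ∀ m, m ∉ X → (γ - γ') m = 0 := by
              intro m hm
              have e1 := hcX' (sr (τ i)) m hm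
              have e2 := hcX' (sr i) m hm
              rw [Pi.sub_apply, hγco, hγ'co, e1, e2]
              ring
            have hd_perp : ∀ k, k ∈ X → B (γ - γ') (sr k) = 0 := by
              intro k hk
              rw [map_sub, LinearMap.sub_apply, hγperpX k hk, hγ'perpX k hk]; ring
            exact (sub_eq_zero.mp (zeroX (γ - γ') hd_supp hd_perp)).symm
          have hLγ : wX (tV γ) = γ := by
            have hx0supp := (hwvec (τ i) hτiX).1
            have h2 : wX (tV (wX (sr (τ i)))) = wX (sr i) - (wX (sr (τ i)) - sr (τ i)) := by
              have h3 : wX (sr (τ i)) = sr (τ i) + (wX (sr (τ i)) - sr (τ i)) := by abel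
              conv_lhs => rw [h3]
              rw [map_add, map_add, htV (τ i), hττ, hwtVX _ hx0supp]
              abel
            have h4 : wX (tV γ) = (2⁻¹ : ℚ) • (wX (sr (τ i)) + wX (tV (wX (sr (τ i))))) := by
              rw [hγ, map_smul, map_smul, map_add, map_add, htV i]
            rw [h4, h2, ← hγ'eqγ, hγ']
            congr 1
            abel
          have hLδ : wX (tV δ) = -δ := by
            have h1 : wX (tV δ) = wX (sr (τ i)) - wX (sr i) + q := by
              rw [hδ, map_sub, map_sub, map_sub, map_sub, htV i, htV (τ i), hττ,
                hwtVX q hqsupp]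
              abel
            have hd'supp : ∀ m, m ∉ X → (wX (tV δ) + δ) m = 0 := by
              intro m hm
              have e1 := hcX' (sr (τ i)) m hm
              have e2 := hcX' (sr i) m hm
              rw [Pi.add_apply, h1, Pi.add_apply, Pi.sub_apply, e1, e2, hqsupp m hm,
                hδco, hqsupp m hm]
              ring
            have hd'perp : ∀ k, k ∈ X → B (wX (tV δ) + δ) (sr k) = 0 := by
              intro k hk
              have hsrkJ : ∀ m, m ∉ J → sr k m = 0 := fun m hm =>
                sr_ne (fun h => hm (by rw [hJm]; exact Or.inr (Or.inr (h ▸ hk))))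
              have h5 : wX (tV (sr k)) = -(sr k) :=
                hwtVX (sr k) (fun m hm => sr_ne (fun h => hm (h ▸ hk)))
              have h6 : B (wX (tV δ)) (sr k) = - B δ (sr k) := by
                calc B (wX (tV δ)) (sr k) = B (wX (tV δ)) (-(wX (tV (sr k)))) := by
                      rw [h5, neg_neg]
                  _ = - B (wX (tV δ)) (wX (tV (sr k))) := by rw [(B _).map_neg]
                  _ = - B δ (sr k) := by rw [hLiso δ (sr k) hδsupp hsrkJ]
              rw [map_add, LinearMap.add_apply, h6, hδperpX k hk]
              ring
            have h7 := zeroX _ hd'supp hd'perp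
            exact eq_neg_of_add_eq_zero_left h7
          have hBγδ : B γ δ = 0 := by
            have h := hLiso γ δ hγsupp hδsupp
            rw [hLγ, hLδ, (B γ).map_neg] at h
            linarith
          have hγi2 : γ i = 2⁻¹ := by
            rw [hγco, hcX' _ i hiX, sr_self, sr_ne hiτ]; ring
          have hγτi2 : γ (τ i) = 2⁻¹ := by
            rw [hγco, hcX' _ (τ i) hτiX, sr_ne (hfix : τ i ≠ i), sr_self]; ring
          set u1 : I → ℚ := γ + (2⁻¹ : ℚ) • δ with hu1
          set u2 : I → ℚ := γ - (2⁻¹ : ℚ) • δ with hu2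
          have hu1perp : ∀ k, k ∈ X → B u1 (sr k) = 0 := by
            intro k hk
            rw [hu1]
            simp only [map_add, map_smul, LinearMap.add_apply, LinearMap.smul_apply,
              smul_eq_mul]
            rw [hγperpX k hk, hδperpX k hk]
            ring
          have hxsupp : ∀ m, m ∉ X → (u1 - sr i) m = 0 := by
            intro m hm
            rw [Pi.sub_apply, hu1, Pi.add_apply, Pi.smul_apply, smul_eq_mul]
            by_cases hmi : m = i
            · rw [hmi, hγi2, hδi, sr_self]; ring
            · by_cases hmτi : m = τ i
              · rw [hmτi, hγτi2, hδτi, sr_ne hfix]; ring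
              · have hmJ : m ∉ J := by
                  rw [hJm]; push_neg; exact ⟨hmi, hmτi, hm⟩
                rw [hγsupp m hmJ, hδsupp m hmJ, sr_ne hmi]; ring
          have hx'supp : ∀ m, m ∉ X → (u2 - sr (τ i)) m = 0 := by
            intro m hm
            rw [Pi.sub_apply, hu2, Pi.sub_apply, Pi.smul_apply, smul_eq_mul]
            by_cases hmi : m = i
            · rw [hmi, hγi2, hδi, sr_ne hiτ]; ring
            · by_cases hmτi : m = τ i
              · rw [hmτi, hγτi2, hδτi, sr_self]; ring
              · have hmJ : m ∉ J := by
                  rw [hJm]; push_neg; exact ⟨hmi, hmτi, hm⟩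
                rw [hγsupp m hmJ, hδsupp m hmJ, sr_ne hmτi]; ring
          have hxge : ∀ k, k ∈ X → 0 ≤ B (u1 - sr i) (sr k) := by
            intro k hk
            rw [map_sub, LinearMap.sub_apply, hu1perp k hk, hBsr]
            have := hAq i k (fun h => hiX (h ▸ hk))
            nlinarith [hεpos i]
          have hxnn := mlem hA hB X posX _ hxsupp hxge
          have hu2dec : u2 = sr (τ i) + (u2 - sr (τ i)) := by abel
          have hb1 : B u1 u2 = B u1 (sr (τ i)) := by
            conv_lhs => rw [hu2dec]
            rw [map_add, perp_supp u1 (u2 - sr (τ i)) X hu1perp hx'supp]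
            ring
          have hu1dec : u1 = sr i + (u1 - sr i) := by abel
          have hb2 : B u1 (sr (τ i)) ≤ 0 := by
            conv_lhs => rw [hu1dec]
            rw [map_add, LinearMap.add_apply]
            have hA1 : B (sr i) (sr (τ i)) ≤ 0 := by
              rw [hBsr]
              nlinarith [hεpos i, hAq i (τ i) hiτ]
            have hA2' : B (u1 - sr i) (sr (τ i)) ≤ 0 := by
              rw [bexpL B (u1 - sr i) (sr (τ i))]
              refine Finset.sum_nonpos fun k _ => ?_
              by_cases hk : k ∈ X
              · have hkτi : B (sr k) (sr (τ i)) ≤ 0 := by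
                  rw [hBsr]
                  nlinarith [hεpos k, hAq k (τ i) (fun h => hτiX (h ▸ hk))]
                exact mul_nonpos_of_nonneg_of_nonpos (hxnn k) hkτi
              · rw [hxsupp k hk]; simp
            linarith
          have hbval : B u1 u2 = B γ γ - 4⁻¹ * B δ δ := by
            rw [hu1, hu2]
            simp only [map_add, map_sub, map_smul, LinearMap.add_apply, LinearMap.sub_apply,
              LinearMap.smul_apply, smul_eq_mul]
            rw [hsym δ γ, hBγδ]
            ring
          have hδδpos : 0 < B δ δ := by
            have := hb1 ▸ hb2
            rw [hbval] at this
            linarith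
          -- final positive definiteness on the `J`-span
          intro v hv hvne
          set aa := v i + v (τ i) with haa
          set bb := (2⁻¹ : ℚ) * (v i - v (τ i)) with hbb
          set y : I → ℚ := v - aa • γ - bb • δ with hy
          have hysupp : ∀ m, m ∉ X → y m = 0 := by
            intro m hm
            simp only [hy, Pi.sub_apply, Pi.smul_apply, smul_eq_mul]
            by_cases hmi : m = i
            · rw [hmi, hγi2, hδi, haa, hbb]; ring
            · by_cases hmτi : m = τ i
              · rw [hmτi, hγτi2, hδτi, haa, hbb]; ring
              · have hmJ : m ∉ J := by
                  rw [hJm]; push_neg; exact ⟨hmi, hmτi, hm⟩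
                rw [hv m hmJ, hγsupp m hmJ, hδsupp m hmJ]; ring
          have hyγ : B γ y = 0 := perp_supp γ y X hγperpX hysupp
          have hyδ : B δ y = 0 := perp_supp δ y X hδperpX hysupp
          have hvdec : v = y + aa • γ + bb • δ := by rw [hy]; abel
          have hexp : B v v = B y y + aa^2 * B γ γ + bb^2 * B δ δ := by
            conv_lhs => rw [hvdec]
            simp only [map_add, map_smul, LinearMap.add_apply, LinearMap.smul_apply,
              smul_eq_mul]
            rw [hsym y γ, hsym y δ, hyγ, hyδ, hsym δ γ, hBγδ]
            ring
          by_cases hy0 : y = 0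
          · have hab : aa ≠ 0 ∨ bb ≠ 0 := by
              by_contra hc
              push_neg at hc
              exact hvne (by rw [hvdec, hy0, hc.1, hc.2]; simp)
            rw [hexp, hy0]
            simp only [map_zero, LinearMap.zero_apply]
            rcases hab with h | h
            · have h5 : 0 < aa^2 := by positivity
              nlinarith [sq_nonneg bb, hδδpos]
            · have h5 : 0 < bb^2 := by positivity
              nlinarith [sq_nonneg aa, hγγ]
          · rw [hexp]
            nlinarith [posX y hysupp hy0, sq_nonneg aa, sq_nonneg bb, hγγ, hδδpos]
        · -- Case B : τ i ≠ i, ε (τ i) ≠ ε i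
          intro v hv hvne
          have hAik : ∀ k, k ∈ X → (A i k : ℚ) = 0 := by
            intro k hk
            by_contra h0
            exact hεiq (mul_right_cancel₀ h0 (hee i k (Or.inl hk)))
          have hAiτi : (A i (τ i) : ℚ) = 0 := by
            by_contra h0
            exact hεiq (mul_right_cancel₀ h0 (hee i (τ i) (Or.inr rfl)))
          have hAτik : ∀ k, k ∈ X → (A (τ i) k : ℚ) = 0 := by
            intro k hk
            have h1 : (A (τ i) k : ℚ) = (A i (τ k) : ℚ) := by exact_mod_cast hAτ' i k
            rw [h1]
            exact hAik (τ k) (hτX k hk)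
          have hAτii : (A (τ i) i : ℚ) = 0 := by
            have h1 : (A (τ i) i : ℚ) = (A i (τ i) : ℚ) := by exact_mod_cast hAτ' i i
            rw [h1]
            exact hAiτi
          set av := v i with ha
          set bv := v (τ i) with hb
          set y : I → ℚ := v - av • sr i - bv • sr (τ i) with hy
          have hysupp : ∀ m, m ∉ X → y m = 0 := by
            intro m hm
            simp only [hy, Pi.sub_apply, Pi.smul_apply, smul_eq_mul]
            by_cases hmi : m = i
            · rw [hmi, sr_self, sr_ne (fun h => hfix h.symm : i ≠ τ i), ← ha]
              ring
            · by_cases hmτi : m = τ i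
              · rw [hmτi, sr_self, sr_ne (hfix : τ i ≠ i), ← hb]
                ring
              · have hmJ : m ∉ J := by
                  rw [hJm]; push_neg; exact ⟨hmi, hmτi, hm⟩
                rw [hv m hmJ, sr_ne hmi, sr_ne hmτi]
                ring
          have hsrik : ∀ k, k ∈ X → B (sr i) (sr k) = 0 := fun k hk => by
            rw [hBsr, hAik k hk]; ring
          have hsrτik : ∀ k, k ∈ X → B (sr (τ i)) (sr k) = 0 := fun k hk => by
            rw [hBsr, hAτik k hk]; ring
          have h1 : B (sr i) y = 0 := perp_supp (sr i) y X hsrik hysupp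
          have h2 : B (sr (τ i)) y = 0 := perp_supp (sr (τ i)) y X hsrτik hysupp
          have h3 : B (sr i) (sr (τ i)) = 0 := by rw [hBsr, hAiτi]; ring
          have h4 : B (sr (τ i)) (sr i) = 0 := by rw [hBsr, hAτii]; ring
          have hvdec : v = y + av • sr i + bv • sr (τ i) := by rw [hy]; abel
          have hexp : B v v = B y y + av^2 * (2 * ε i) + bv^2 * (2 * ε (τ i)) := by
            conv_lhs => rw [hvdec]
            simp only [map_add, map_smul, LinearMap.add_apply, LinearMap.smul_apply, smul_eq_mul]
            rw [hsym y (sr i), hsym y (sr (τ i)), h1, h2, h3, h4,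
              B_sr_self hA hB i, B_sr_self hA hB (τ i)]
            ring
          by_cases hy0 : y = 0
          · have hab : av ≠ 0 ∨ bv ≠ 0 := by
              by_contra hc
              push_neg at hc
              exact hvne (by rw [hvdec, hy0, hc.1, hc.2]; simp)
            rw [hexp, hy0]
            simp only [map_zero, LinearMap.zero_apply]
            rcases hab with h | h
            · have h5 : 0 < av^2 := by positivity
              nlinarith [hεpos i, hεpos (τ i), sq_nonneg bv]
            · have h5 : 0 < bv^2 := by positivity
              nlinarith [hεpos i, hεpos (τ i), sq_nonneg av]
          · have h5 : 0 < B y y := posX y hysupp hy0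
            rw [hexp]
            nlinarith [hεpos i, hεpos (τ i), sq_nonneg av, sq_nonneg bv]
    have hiff : 0 < B γ γ ↔ (i = i ∧ Finite (Wpara s (J : Set I))) :=
      ⟨fun h => ⟨rfl, hdir2 h⟩, fun h => hdir1 h.2⟩
    constructor
    · rw [hbar_i]
      exact hiff
    · intro hnot
      rw [hbar_i]
      by_contra hgt
      push_neg at hgt
      exact hnot ⟨rfl, hdir2 hgt⟩
  · -- off-diagonal
    have hτji : τ j ≠ i := by
      intro h
      have h1 : τ j ∈ Istar := by rw [h]; exact hi
      have h2 := hrep j hj h1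
      exact hij (by rw [← h, h2])
    have hτij : τ i ≠ j := by
      intro h
      exact hτji (by rw [← h, hττ])
    have hτiτj : τ i ≠ τ j := fun h => hij (τ.injective h)
    have T1 : B (sr i) (sr j) ≤ 0 := by
      rw [hBsr]
      have := hAq i j hij
      nlinarith [hεpos i]
    have T2 : B (sr i) (wX (sr (τ j))) ≤ 0 :=
      hBneg i hiX (τ j) hτjX (fun h => hτji h.symm)
    have T3 : B (wX (sr (τ i))) (sr j) ≤ 0 := by
      rw [hBwX1]
      exact hBneg (τ i) hτiX j hjX hτij
    have T4 : B (wX (sr (τ i))) (wX (sr (τ j))) ≤ 0 := by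
      rw [hBwX, hBsr, hAτ]
      have := hAq i j hij
      nlinarith [hεpos (τ i)]
    have hexp : B (bar (σmap wX tV) (sr i)) (bar (σmap wX tV) (sr j))
        = 4⁻¹ * (B (sr i) (sr j) + B (sr i) (wX (sr (τ j)))
          + B (wX (sr (τ i))) (sr j) + B (wX (sr (τ i))) (wX (sr (τ j)))) := by
      rw [hbar i, hbar j]
      simp only [map_smul, map_add, LinearMap.smul_apply, LinearMap.add_apply, smul_eq_mul]
      ring
    have hle : B (bar (σmap wX tV) (sr i)) (bar (σmap wX tV) (sr j)) ≤ 0 := by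
      rw [hexp]; linarith
    refine ⟨⟨fun h => absurd h (by linarith), fun h => absurd h.1 hij⟩, fun _ => hle⟩

end KMStmt
end
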